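/- arXiv:0707.2167 — 6 statements merged into one kernel-verified Lean document; each statement's English description precedes it below -/
import Mathlib

section
/- If H is a subgroup of a finite group G acting on a commutative ring k, and the trace map tr_G(x) = Σ_{σ∈G} σ(x) is surjective onto k^G, then the trace map tr_H(x) = Σ_{σ∈H} σ(x) is surjective onto k^H. -/
open scoped Classical in
/-- The trace map of the subgroup `H` acting on `k`. -/
noncomputable def tr {G : Type*} [Group G] [Fintype G] {k : Type*} [CommRing k]
    [MulSemiringAction G k] (H : Subgroup G) (x : k) : k :=
  ∑ σ : G, if σ ∈ H then σ • x else 0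

open scoped Classical in
lemma tr_eq_sum_subtype {G : Type*} [Group G] [Fintype G] {k : Type*} [CommRing k]
    [MulSemiringAction G k] (H : Subgroup G) (x : k) :
    tr H x = ∑ h : H, (h : G) • x := by
  rw [tr, ← Finset.sum_filter]
  rw [← Finset.sum_subtype (Finset.univ.filter (· ∈ H)) (p := (· ∈ H)) (by simp)
    (fun σ => σ • x)]

/-- If the trace of `G` is surjective onto the `G`-invariants, then for any subgroup `H`
the trace of `H` is surjective onto the `H`-invariants. -/
theorem trace_surjective_of_subgroup {G k : Type*} [Group G] [Fintype G] [CommRing k]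
    [MulSemiringAction G k] (H : Subgroup G)
    (hG : ∀ y : k, (∀ g : G, g • y = y) → ∃ x : k, tr (⊤ : Subgroup G) x = y) :
    ∀ y : k, (∀ h : G, h ∈ H → h • y = y) → ∃ x : k, tr H x = y := by
  classical
  obtain ⟨x, hx⟩ := hG 1 (fun g => smul_one g)
  intro y hy
  set e : k := ∑ q : G ⧸ H, (Quotient.out q)⁻¹ • x with he
  have key : tr H e = 1 := by
    rw [tr_eq_sum_subtype]
    have : ∀ h : H, (h : G) • e = ∑ q : G ⧸ H, ((h : G) * (Quotient.out q)⁻¹) • x := by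
      intro h
      rw [he, Finset.smul_sum]
      exact Finset.sum_congr rfl fun q _ => (mul_smul _ _ x).symm
    simp_rw [this]
    rw [← Fintype.sum_prod_type']
    have hbij : Function.Bijective
        (fun p : H × G ⧸ H => (p.1 : G) * (Quotient.out p.2)⁻¹) := by
      rw [Function.bijective_iff_has_inverse]
      refine ⟨fun σ => ⟨⟨σ * Quotient.out ((σ⁻¹ : G) : G ⧸ H), ?_⟩,
        ((σ⁻¹ : G) : G ⧸ H)⟩, ?_, ?_⟩
      · have := QuotientGroup.mk_out_eq_mul H (σ⁻¹ : G)
        obtain ⟨h, hh⟩ := this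
        rw [hh]
        simp only [← mul_assoc]
        rw [mul_inv_cancel, one_mul]
        exact h.2
      · rintro ⟨h, q⟩
        have hq : ((((h : G) * (Quotient.out q)⁻¹)⁻¹ : G) : G ⧸ H) = q := by
          rw [mul_inv_rev, inv_inv, QuotientGroup.mk_mul_of_mem _ (inv_mem h.2),
            QuotientGroup.out_eq']
        refine Prod.ext (Subtype.ext ?_) hq
        simp only [hq]
        simp [mul_assoc]
      · intro σ
        simp [mul_assoc]
    rw [Fintype.sum_bijective _ hbij _ (fun σ => σ • x) (fun p => rfl)]
    rw [← hx, tr]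
    simp
  refine ⟨e * y, ?_⟩
  rw [tr_eq_sum_subtype]
  have : ∀ h : H, (h : G) • (e * y) = ((h : G) • e) * y := by
    intro h
    rw [smul_mul', hy _ h.2]
  simp_rw [this, ← Finset.sum_mul, ← tr_eq_sum_subtype, key, one_mul]
end

section
/- Let G be a finite group of order p_1^{d_1}···p_e^{d_e} acting on a commutative ring k, and for each i let P_i be a Sylow p_i-subgroup. If for each i there exists x_i ∈ k with tr_{P_i}(x_i) = 1, then there exists x ∈ k with tr_G(x) = 1. -/
/-!
Decomposing `G` into the left cosets `q.out * H` gives `tr_G x = ∑_q q.out • tr_H x`, so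
`tr_P x = 1` forces `tr_G x = [G : P]`. Hence the integers whose image in `k` is a `G`-trace
form an ideal of `ℤ` containing `|G|` and the index of a Sylow `p`-subgroup for each `p ∣ |G|`.
No prime divides all of these, so the ideal is `ℤ` and `1` is a trace.
-/

theorem Int.ideal_eq_top_of_forall_prime_exists_not_dvd {I : Ideal ℤ}
    (h : ∀ p : ℕ, p.Prime → ∃ m ∈ I, ¬(p : ℤ) ∣ m) : I = ⊤ := by
  set g := Submodule.IsPrincipal.generator I
  have hg : g.natAbs = 1 := by
    by_contra hne
    obtain ⟨p, hp, hpg⟩ := Nat.exists_prime_and_dvd hne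
    obtain ⟨m, hm, hpm⟩ := h p hp
    exact hpm <| (Int.natCast_dvd.mpr hpg).trans
      ((Submodule.IsPrincipal.mem_iff_generator_dvd I).mp hm)
  exact I.eq_top_of_isUnit_mem (Submodule.IsPrincipal.generator_mem I)
    (Int.isUnit_iff_natAbs_eq.mpr hg)

namespace QuotientGroup

variable {G : Type*} [Group G] (H : Subgroup G)

noncomputable def outMulEquiv : (G ⧸ H) × H ≃ G where
  toFun qh := qh.1.out * qh.2
  invFun σ := (σ, ⟨(σ : G ⧸ H).out⁻¹ * σ, QuotientGroup.eq.mp (out_eq' _)⟩)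
  left_inv := fun ⟨q, h⟩ => by ext <;> simp
  right_inv σ := mul_inv_cancel_left _ σ

end QuotientGroup

section Trace

open scoped Classical

variable {G : Type*} [Group G] [Fintype G] {k : Type*} [CommRing k] [MulSemiringAction G k]

theorem tr_eq_sum (H : Subgroup G) (x : k) : tr H x = ∑ h : H, (h : G) • x := by
  rw [tr, ← Finset.sum_filter]
  exact Finset.sum_subtype _ (by simp) _

theorem tr_top (x : k) : tr (⊤ : Subgroup G) x = ∑ σ : G, σ • x := by
  simp [tr]

theorem tr_add (H : Subgroup G) (x y : k) : tr H (x + y) = tr H x + tr H y := by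
  simp only [tr_eq_sum, smul_add, Finset.sum_add_distrib]

theorem tr_one (H : Subgroup G) : tr H (1 : k) = Nat.card H := by
  simp [tr_eq_sum, Nat.card_eq_fintype_card]

theorem tr_top_eq_sum_quotient (H : Subgroup G) (x : k) :
    tr (⊤ : Subgroup G) x = ∑ q : G ⧸ H, q.out • tr H x := by
  rw [tr_top, ← (QuotientGroup.outMulEquiv H).sum_comp, Fintype.sum_prod_type]
  simp [QuotientGroup.outMulEquiv, tr_eq_sum, mul_smul, Finset.smul_sum]

theorem tr_top_eq_index_of_tr_eq_one {H : Subgroup G} {x : k} (hx : tr H x = 1) :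
    tr (⊤ : Subgroup G) x = H.index := by
  simp [tr_top_eq_sum_quotient H, hx, Subgroup.index, Nat.card_eq_fintype_card]

variable (k) in
noncomputable def trAddMonoidHom (H : Subgroup G) : k →+ k :=
  AddMonoidHom.mk' (tr H) (tr_add H)

variable (k) in
noncomputable def intTraceIdeal (H : Subgroup G) : Ideal ℤ :=
  AddSubgroup.toIntSubmodule ((trAddMonoidHom k H).range.comap (Int.castAddHom k))

theorem mem_intTraceIdeal {H : Subgroup G} {m : ℤ} :
    m ∈ intTraceIdeal k H ↔ ∃ x : k, tr H x = m :=
  Iff.rfl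

end Trace

/-- If for every prime `p` dividing `|G|` some Sylow `p`-subgroup admits an element of
trace `1`, then `G` admits an element of trace `1`. -/
theorem trace_one_of_sylows {G k : Type*} [Group G] [Fintype G] [CommRing k]
    [MulSemiringAction G k]
    (h : ∀ p : ℕ, p.Prime → p ∣ Fintype.card G →
      ∃ P : Sylow p G, ∃ x : k, tr (P : Subgroup G) x = 1) :
    ∃ x : k, tr (⊤ : Subgroup G) x = 1 := by
  have htop : intTraceIdeal k (⊤ : Subgroup G) = ⊤ := by
    refine Int.ideal_eq_top_of_forall_prime_exists_not_dvd fun p hp => ?_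
    by_cases hpG : p ∣ Fintype.card G
    · have : Fact p.Prime := ⟨hp⟩
      obtain ⟨P, x, hx⟩ := h p hp hpG
      exact ⟨P.index, mem_intTraceIdeal.mpr ⟨x, by simp [tr_top_eq_index_of_tr_eq_one hx]⟩,
        by exact_mod_cast P.not_dvd_index⟩
    · exact ⟨Fintype.card G,
        mem_intTraceIdeal.mpr ⟨1, by simp [tr_one, Nat.card_eq_fintype_card]⟩,
        by exact_mod_cast hpG⟩
  have hone : (1 : ℤ) ∈ intTraceIdeal k (⊤ : Subgroup G) := htop ▸ Submodule.mem_top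
  obtain ⟨x, hx⟩ := mem_intTraceIdeal.mp hone
  exact ⟨x, by simpa using hx⟩
end

section
/- Let P be a subgroup of a finite group G, and let L_P be the set of subsets {g_1,…,g_l} ⊆ G that are complete sets of left coset representatives of P in G, with G acting on L_P by left multiplication. If x ∈ k satisfies tr_P(x) = Σ_{g∈P} g(x) = 1 in a commutative ring k with G-action, then Σ_{{g_1,…,g_l}∈L_P} ∏_{j=1}^l g_j(x) = 1. -/
/-! For each `a : G` the sum of `g • x` over the coset `aP` is `a • tr_P x = 1`. Multiplying these
identities over all cosets and expanding the product gives a sum over all ways of choosing one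
element from each coset, that is, over the transversals of `P`. -/

/-- `S` is a complete set of left coset representatives of `P` in `G`: it contains
exactly one element of each left coset of `P`. -/
def IsTransversal {G : Type*} [Group G] (P : Subgroup G) (S : Finset G) : Prop :=
  ∀ g : G, ∃! s : G, s ∈ S ∧ g⁻¹ * s ∈ P

open Finset

section Sections

variable {α β : Type*} [Fintype β] [DecidableEq α] {π : α → β}

theorem bijOn_image_univ_of_rightInverse {f : β → α}
    (hf : Function.RightInverse f π) : Set.BijOn π (univ.image f : Finset α) Set.univ := by
  refine ⟨Set.mapsTo_univ _ _, ?_, fun b _ => ⟨f b, by simp, hf b⟩⟩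
  simp only [coe_image, coe_univ, Set.image_univ]
  rintro _ ⟨b₁, rfl⟩ _ ⟨b₂, rfl⟩ h
  rw [hf b₁, hf b₂] at h
  rw [h]

theorem eq_of_image_univ_eq_of_rightInverse {f g : β → α}
    (hf : Function.RightInverse f π) (hg : Function.RightInverse g π)
    (h : univ.image f = univ.image g) : f = g := by
  funext b
  obtain ⟨c, -, hc⟩ := mem_image.mp (h ▸ mem_image_of_mem f (mem_univ b))
  have hcb : c = b := by rw [← hg c, hc, hf b]
  rw [← hc, hcb]

theorem exists_rightInverse_image_univ_eq {S : Finset α}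
    (hS : Set.BijOn π S Set.univ) :
    ∃ f : β → α, Function.RightInverse f π ∧ univ.image f = S := by
  choose f hfS hf using fun b => hS.surjOn (Set.mem_univ b)
  refine ⟨f, hf, Subset.antisymm (image_subset_iff.mpr fun b _ => hfS b) fun a ha => ?_⟩
  exact mem_image.mpr ⟨π a, mem_univ _, hS.injOn (hfS _) ha (hf _)⟩

end Sections

open scoped Classical in
theorem prod_sum_fiber_eq_sum_prod_transversal {α β R : Type*} [Fintype α] [Fintype β]
    [DecidableEq α] [DecidableEq β] [CommSemiring R] (π : α → β) (φ : α → R) :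
    ∏ b, ∑ a ∈ univ.filter (fun a => π a = b), φ a =
      ∑ S ∈ univ.filter (fun S : Finset α => Set.BijOn π S Set.univ), ∏ a ∈ S, φ a := by
  rw [prod_univ_sum]
  have mem_sections : ∀ f : β → α, f ∈ Fintype.piFinset (fun b => univ.filter (fun a => π a = b))
      ↔ Function.RightInverse f π := by
    simp [Function.RightInverse, Function.LeftInverse]
  refine sum_bij (fun f _ => univ.image f) (fun f hf => ?_) (fun f hf g hg => ?_)
    (fun S hS => ?_) (fun f hf => ?_)
  · exact mem_filter.mpr ⟨mem_univ _, bijOn_image_univ_of_rightInverse ((mem_sections f).mp hf)⟩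
  · exact eq_of_image_univ_eq_of_rightInverse ((mem_sections f).mp hf) ((mem_sections g).mp hg)
  · obtain ⟨f, hf, rfl⟩ := exists_rightInverse_image_univ_eq (mem_filter.mp hS).2
    exact ⟨f, (mem_sections f).mpr hf, rfl⟩
  · have hf := (mem_sections f).mp hf
    rw [prod_image fun b _ c _ h => by rw [← hf b, ← hf c, h]]

section Coset

variable {G : Type*} [Group G]

theorem isTransversal_iff_bijOn (P : Subgroup G) (S : Finset G) :
    IsTransversal P S ↔ Set.BijOn (QuotientGroup.mk : G → G ⧸ P) S Set.univ := by
  constructor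
  · intro h
    refine ⟨Set.mapsTo_univ _ _, fun s hs t ht hst => ?_, fun c _ => ?_⟩
    · exact (h s).unique ⟨hs, by simp⟩ ⟨ht, QuotientGroup.eq.mp hst⟩
    · obtain ⟨g, rfl⟩ := QuotientGroup.mk_surjective c
      obtain ⟨s, ⟨hs, hgs⟩, -⟩ := h g
      exact ⟨s, hs, (QuotientGroup.eq.mpr hgs).symm⟩
  · intro h g
    obtain ⟨s, hs, hsg⟩ := h.surjOn (Set.mem_univ (g : G ⧸ P))
    refine ⟨s, ⟨hs, QuotientGroup.eq.mp hsg.symm⟩, fun t ⟨ht, hgt⟩ => h.injOn ht hs ?_⟩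
    exact (QuotientGroup.eq.mpr hgt).symm.trans hsg.symm

open scoped Classical in
theorem sum_coset_smul_eq_smul_tr [Fintype G] {k : Type*} [CommRing k] [MulSemiringAction G k]
    (P : Subgroup G) (x : k) (a : G) :
    ∑ g ∈ univ.filter (fun g : G => (g : G ⧸ P) = a), g • x = a • tr P x := by
  rw [tr, smul_sum, sum_filter]
  refine Fintype.sum_equiv (Equiv.mulLeft a⁻¹) _ _ fun g => ?_
  have hmem : (g : G ⧸ P) = a ↔ a⁻¹ * g ∈ P := eq_comm.trans QuotientGroup.eq
  by_cases hg : a⁻¹ * g ∈ P <;> simp [hmem, hg, smul_smul]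

end Coset

open scoped Classical in
/-- If `tr_P x = 1` then the sum, over all complete sets of left coset representatives
`S` of `P` in `G`, of the products `∏_{g ∈ S} g • x`, equals `1`. -/
theorem sum_over_transversals {G k : Type*} [Group G] [Fintype G] [CommRing k]
    [MulSemiringAction G k] (P : Subgroup G) (x : k) (hx : tr P x = 1) :
    ∑ S ∈ Finset.univ.filter (fun S : Finset G => IsTransversal P S),
      ∏ g ∈ S, g • x = 1 := by
  calc _ = ∑ S ∈ univ.filter
            (fun S : Finset G => Set.BijOn (QuotientGroup.mk : G → G ⧸ P) S Set.univ),
          ∏ g ∈ S, g • x := by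
        simp_rw [isTransversal_iff_bijOn]
    _ = ∏ c : G ⧸ P, ∑ g ∈ univ.filter (fun g : G => (g : G ⧸ P) = c), g • x :=
        (prod_sum_fiber_eq_sum_prod_transversal _ _).symm
    _ = 1 := prod_eq_one fun c _ => by
        obtain ⟨a, rfl⟩ := QuotientGroup.mk_surjective c
        rw [sum_coset_smul_eq_smul_tr, hx, smul_one]
end

section
/- Let T = {P_1,…,P_m} be a set of representatives of the conjugacy classes of prime-order subgroups of a finite group G. Let X = ∏_{i=1}^m L_{P_i}, where L_{P_i} is the set of complete sets of left coset representatives of P_i in G, with the diagonal G-action. Then for every x ∈ X and every prime-order subgroup P ≤ G, stab(x) ∩ P = 1. -/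
open scoped Classical in
/-- Let `P 1, …, P m` be representatives of the conjugacy classes of prime-order
subgroups of `G`, and let `x` be a tuple of transversals of the `P i` (an element of the
product of the `L_{P i}`, on which `G` acts diagonally by left multiplication).  Then
the stabilizer of `x` intersects every prime-order subgroup `Q` trivially. -/
theorem stabilizer_of_tuple_of_transversals {G : Type*} [Group G] [Fintype G]
    (m : ℕ) (P : Fin m → Subgroup G)
    (hPprime : ∀ i, (Nat.card (P i)).Prime)
    (hPrep : ∀ Q : Subgroup G, (Nat.card Q).Prime →
      ∃! i : Fin m, ∃ g : G, Q.map (MulAut.conj g).toMonoidHom = P i)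
    (x : (i : Fin m) → Finset G) (hx : ∀ i, IsTransversal (P i) (x i))
    (Q : Subgroup G) (hQ : (Nat.card Q).Prime) :
    ∀ g : G, g ∈ Q → (∀ i, (x i).image (fun s => g * s) = x i) → g = 1 := by
  intro g hg hfix
  obtain ⟨i, ⟨h, hh⟩, -⟩ := hPrep Q hQ
  have hgs : h * g * h⁻¹ ∈ P i := by
    rw [← hh]
    exact ⟨g, hg, rfl⟩
  obtain ⟨s, ⟨hsS, hs⟩, huniq⟩ := hx i h⁻¹
  have hgsS : g * s ∈ x i := by
    rw [← hfix i]; exact Finset.mem_image_of_mem _ hsS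
  have h2 : (h⁻¹)⁻¹ * (g * s) ∈ P i := by
    have heq : (h⁻¹)⁻¹ * (g * s) = (h * g * h⁻¹) * ((h⁻¹)⁻¹ * s) := by group
    rw [heq]
    exact mul_mem hgs hs
  have key : g * s = s := huniq (g * s) ⟨hgsS, h2⟩
  have : g * s = 1 * s := by rw [one_mul]; exact key
  exact mul_right_cancel this
end

section
/- Let T = {P_1,…,P_m} contain one subgroup from each conjugacy class of prime-order subgroups of a finite group G acting on a commutative ring k. Suppose x_{P_i} ∈ k satisfies tr_{P_i}(x_{P_i}) = 1 for each i. Let X = ∏_i L_{P_i} (L_{P_i} the G-set of complete left coset representative sets of P_i, diagonal action), and let w_1,…,w_s be orbit representatives, w_j = ({g_{ij1},…,g_{ijl_i}})_{i=1}^m. Then x_G = Σ_{j=1}^s ∏_{i=1}^m ∏_{t=1}^{l_i} g_{ijt}(x_{P_i}) satisfies tr_G(x_G) = 1. -/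
/-!
Every element of prime order generates a subgroup conjugate to some `P i`, and no nontrivial
element of a conjugate of `P i` fixes a transversal of `P i` under left translation; so `G` acts
freely on the set `X` of tuples of transversals, and `tr_G x_G` is the sum over all of `X`.
That sum factors over `i`, and a transversal of `P i` is a choice of one element in each left
coset, so each factor is `∏_{C ∈ G/P_i} ∑_{g ∈ C} g • x_{P_i} = ∏_C a_C • tr_{P_i} x_{P_i} = 1`.
-/

open Finset
open scoped Pointwise Classical

theorem sum_prod_section_eq_prod_sum_fiber {α β R : Type*} [Fintype α] [Fintype β]
    [DecidableEq α] [DecidableEq β] [CommSemiring R] (π : α → β) (f : α → R) :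
    ∑ S ∈ univ.filter (fun S : Finset α => ∀ b, ∃! a, a ∈ S ∧ π a = b), ∏ a ∈ S, f a
      = ∏ b, ∑ a ∈ univ.filter (fun a => π a = b), f a := by
  rw [prod_univ_sum]
  symm
  refine sum_bij (fun φ _ => univ.image φ) ?_ ?_ ?_ ?_
  · intro φ hφ
    simp only [Fintype.mem_piFinset, mem_filter, mem_univ, true_and] at hφ ⊢
    refine fun b => ⟨φ b, ⟨mem_image_of_mem φ (mem_univ b), hφ b⟩, ?_⟩
    rintro a ⟨ha, rfl⟩
    obtain ⟨c, -, rfl⟩ := mem_image.mp ha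
    rw [hφ]
  · intro φ₁ hφ₁ φ₂ hφ₂ h
    simp only [Fintype.mem_piFinset, mem_filter, mem_univ, true_and] at hφ₁ hφ₂
    funext b
    obtain ⟨c, -, hc⟩ := mem_image.mp (h ▸ mem_image_of_mem φ₁ (mem_univ b))
    have hcb : c = b := by rw [← hφ₂ c, hc, hφ₁]
    rw [← hc, hcb]
  · intro S hS
    simp only [mem_filter, mem_univ, true_and] at hS
    choose φ hφS hφπ using fun b => (hS b).exists
    refine ⟨φ, by simpa [Fintype.mem_piFinset] using hφπ, ?_⟩
    ext a
    simp only [mem_image, mem_univ, true_and]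
    refine ⟨by rintro ⟨b, rfl⟩; exact hφS b, fun ha => ⟨π a, ?_⟩⟩
    exact (hS (π a)).unique ⟨hφS _, hφπ _⟩ ⟨ha, rfl⟩
  · intro φ hφ
    simp only [Fintype.mem_piFinset, mem_filter, mem_univ, true_and] at hφ
    rw [prod_image fun b _ c _ h => by rw [← hφ b, h, hφ c]]

section Transversal

variable {G : Type*} [Group G] {P : Subgroup G} {S : Finset G}

theorem isTransversal_iff_existsUnique_mk :
    IsTransversal P S ↔ ∀ C : G ⧸ P, ∃! s, s ∈ S ∧ (s : G ⧸ P) = C := by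
  rw [QuotientGroup.mk_surjective.forall]
  exact forall_congr' fun g => existsUnique_congr fun s =>
    and_congr_right' ((QuotientGroup.eq (s := P)).symm.trans eq_comm)

theorem IsTransversal.smul (hS : IsTransversal P S) (σ : G) : IsTransversal P (σ • S) := by
  intro g
  rw [(Equiv.mulLeft σ).bijective.existsUnique_iff]
  convert hS (σ⁻¹ * g) using 3 with s
  · exact smul_mem_smul_finset_iff σ
  · simp [mul_assoc]

theorem IsTransversal.eq_one_of_smul_eq (hS : IsTransversal P S) {h a : G}
    (hconj : a * h * a⁻¹ ∈ P) (hfix : h • S = S) : h = 1 := by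
  obtain ⟨s, ⟨hsS, hsP⟩, huniq⟩ := hS a⁻¹
  -- `h * s` lies in `S` and in the same left coset `a⁻¹ P` as `s`.
  have hhs : h * s ∈ S := hfix ▸ smul_mem_smul_finset hsS
  have : (a⁻¹)⁻¹ * (h * s) = (a * h * a⁻¹) * ((a⁻¹)⁻¹ * s) := by group
  simpa using huniq (h * s) ⟨hhs, this ▸ mul_mem hconj hsP⟩

end Transversal

theorem exists_prime_orderOf_mem_zpowers {G : Type*} [Group G] [Finite G] {σ : G} (hσ : σ ≠ 1) :
    ∃ x ∈ Subgroup.zpowers σ, (orderOf x).Prime := by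
  have hp : (orderOf σ).minFac.Prime := Nat.minFac_prime (by rwa [Ne, orderOf_eq_one_iff])
  refine ⟨σ ^ (orderOf σ / (orderOf σ).minFac), Subgroup.npow_mem_zpowers _ _, ?_⟩
  rwa [orderOf_pow_orderOf_div (orderOf_pos σ).ne' (Nat.minFac_dvd _)]

section Trace

variable {G k : Type*} [Group G] [Fintype G] [CommRing k] [MulSemiringAction G k]

theorem sum_coset_smul_eq_one {P : Subgroup G} {x : k} (hx : tr P x = 1) (C : G ⧸ P) :
    ∑ g ∈ univ.filter (fun g : G => (g : G ⧸ P) = C), g • x = 1 := by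
  induction C using QuotientGroup.induction_on with | H a => ?_
  have hmem : ∀ g, ((a * g : G) : G ⧸ P) = a ↔ g ∈ P := fun g =>
    eq_comm.trans (QuotientGroup.eq.trans (by rw [inv_mul_cancel_left]))
  calc ∑ g ∈ univ.filter (fun g : G => (g : G ⧸ P) = a), g • x
      = ∑ g : G, if g ∈ P then a • g • x else 0 := by
        rw [sum_filter, ← Equiv.sum_comp (Equiv.mulLeft a)]
        simp only [Equiv.coe_mulLeft, hmem, mul_smul]
    _ = a • tr P x := by simp only [tr, smul_sum, smul_ite, smul_zero]
    _ = 1 := by rw [hx, smul_one]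

theorem sum_transversals_prod_smul_eq_one {P : Subgroup G} {x : k} (hx : tr P x = 1) :
    ∑ S ∈ univ.filter (IsTransversal P), ∏ g ∈ S, g • x = 1 := by
  simp only [isTransversal_iff_existsUnique_mk]
  rw [sum_prod_section_eq_prod_sum_fiber]
  exact prod_eq_one fun C _ => sum_coset_smul_eq_one hx C

end Trace

theorem eq_one_of_smul_eq_of_isTransversal {G ι : Type*} [Group G] [Finite G]
    {P : ι → Subgroup G}
    (hP : ∀ Q : Subgroup G, (Nat.card Q).Prime →
      ∃ i, ∃ a : G, Q.map (MulAut.conj a).toMonoidHom = P i)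
    {v : ι → Finset G} (hv : ∀ i, IsTransversal (P i) (v i)) {σ : G} (hσ : σ • v = v) :
    σ = 1 := by
  by_contra hne
  obtain ⟨x, hxσ, hx⟩ := exists_prime_orderOf_mem_zpowers hne
  obtain ⟨i, a, hmap⟩ := hP _ (by rwa [Nat.card_zpowers])
  have hfix : x • v i = v i :=
    congrFun (Subgroup.zpowers_le.mpr (MulAction.mem_stabilizer_iff.mpr hσ) hxσ) i
  have hconj : a * x * a⁻¹ ∈ P i := hmap ▸ ⟨x, Subgroup.mem_zpowers x, rfl⟩
  rw [(hv i).eq_one_of_smul_eq hconj hfix, orderOf_one] at hx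
  exact Nat.not_prime_one hx

theorem sum_sum_smul_orbit_reps {G α β ι : Type*} [Group G] [Fintype G] [MulAction G α]
    [Fintype ι] [AddCommMonoid β] {X : Finset α} (hX : ∀ (σ : G) x, x ∈ X → σ • x ∈ X)
    (hfree : ∀ (σ : G) x, x ∈ X → σ • x = x → σ = 1)
    {w : ι → α} (hw : ∀ j, w j ∈ X) (horb : ∀ x ∈ X, ∃! j, ∃ σ : G, σ • x = w j)
    (f : α → β) :
    ∑ σ : G, ∑ j, f (σ • w j) = ∑ x ∈ X, f x := by
  rw [← sum_product']
  refine sum_bij (fun p _ => p.1 • w p.2) (fun p _ => hX _ _ (hw _)) ?_ ?_ fun _ _ => rfl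
  · rintro ⟨σ, j⟩ - ⟨τ, j'⟩ - h
    have hj : j = j' := (horb _ (hX σ _ (hw j))).unique ⟨σ⁻¹, inv_smul_smul σ (w j)⟩
      ⟨τ⁻¹, by simp only at h; rw [h, inv_smul_smul]⟩
    subst hj
    have : (τ⁻¹ * σ) • w j = w j := by simp only at h; rw [mul_smul, h, inv_smul_smul]
    rw [inv_mul_eq_one.mp (hfree _ _ (hw j) this)]
  · intro x hx
    obtain ⟨j, ⟨σ, hσ⟩, -⟩ := horb x hx
    exact ⟨(σ⁻¹, j), mem_univ _, by rw [← hσ, inv_smul_smul]⟩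

theorem smul_prod_smul {G M : Type*} [Group G] [CommMonoid M] [MulDistribMulAction G M]
    (σ : G) (S : Finset G) (y : M) :
    σ • ∏ g ∈ S, g • y = ∏ g ∈ σ • S, g • y := by
  rw [smul_prod', smul_finset_def, prod_image fun a _ b _ h => MulAction.injective σ h]
  simp only [smul_smul, smul_eq_mul]

open scoped Classical in
theorem trace_one_formula_general {G k : Type*} [Group G] [Fintype G] [CommRing k]
    [MulSemiringAction G k]
    (m : ℕ) (P : Fin m → Subgroup G)
    (hPrep : ∀ Q : Subgroup G, (Nat.card Q).Prime →
      ∃! i : Fin m, ∃ g : G, Q.map (MulAut.conj g).toMonoidHom = P i)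
    (xP : Fin m → k) (hxP : ∀ i, tr (P i) (xP i) = 1)
    (s : ℕ) (w : Fin s → (i : Fin m) → Finset G)
    (hw : ∀ j i, IsTransversal (P i) (w j i))
    (horb : ∀ v : (i : Fin m) → Finset G, (∀ i, IsTransversal (P i) (v i)) →
      ∃! j : Fin s, ∃ g : G, (fun i => (v i).image (fun t => g * t)) = w j) :
    tr (⊤ : Subgroup G) (∑ j : Fin s, ∏ i : Fin m, ∏ g ∈ w j i, g • xP i) = 1 := by
  set F : ((i : Fin m) → Finset G) → k := fun v => ∏ i, ∏ g ∈ v i, g • xP i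
  have hF (σ : G) (v) : σ • F v = F (σ • v) := by
    rw [smul_prod']
    exact prod_congr rfl fun i _ => smul_prod_smul σ (v i) (xP i)
  calc tr ⊤ (∑ j, F (w j)) = ∑ σ : G, ∑ j, F (σ • w j) := by
        simp only [tr, Subgroup.mem_top, if_true, smul_sum, hF]
    _ = ∑ v ∈ univ.filter fun v : (i : Fin m) → Finset G => ∀ i, IsTransversal (P i) (v i),
          F v := by
        refine sum_sum_smul_orbit_reps ?_ ?_ ?_ ?_ F
        · simpa using fun σ v hv i => (hv i).smul σ
        · exact fun σ v hv => eq_one_of_smul_eq_of_isTransversal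
            (fun Q hQ => (hPrep Q hQ).exists) (by simpa using hv)
        · simpa using hw
        · -- `horb` is stated with `image`, the unfolded form of the pointwise action `σ • v`.
          intro v hv
          exact horb v (by simpa using hv)
    _ = ∏ i, ∑ S ∈ univ.filter (IsTransversal (P i)), ∏ g ∈ S, g • xP i := by
        rw [prod_univ_sum]
        congr 1
        ext v
        simp [Fintype.mem_piFinset]
    _ = 1 := prod_eq_one fun i _ => sum_transversals_prod_smul_eq_one (hxP i)

open scoped Classical in
/-- The explicit formula for an element of trace `1` for `G` in terms of elements of
trace `1` for representatives `P 1, …, P m` of the conjugacy classes of prime-order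
subgroups: if `w 1, …, w s` are representatives of the orbits of the diagonal action of
`G` on the product of the sets of transversals of the `P i`, then
`x_G = ∑_j ∏_i ∏_{g ∈ w j i} g • x_{P i}` satisfies `tr_G x_G = 1`. -/
theorem trace_one_formula {G k : Type*} [Group G] [Fintype G] [CommRing k]
    [MulSemiringAction G k]
    (m : ℕ) (P : Fin m → Subgroup G)
    (hPprime : ∀ i, (Nat.card (P i)).Prime)
    (hPrep : ∀ Q : Subgroup G, (Nat.card Q).Prime →
      ∃! i : Fin m, ∃ g : G, Q.map (MulAut.conj g).toMonoidHom = P i)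
    (xP : Fin m → k) (hxP : ∀ i, tr (P i) (xP i) = 1)
    (s : ℕ) (w : Fin s → (i : Fin m) → Finset G)
    (hw : ∀ j i, IsTransversal (P i) (w j i))
    (horb : ∀ v : (i : Fin m) → Finset G, (∀ i, IsTransversal (P i) (v i)) →
      ∃! j : Fin s, ∃ g : G, (fun i => (v i).image (fun t => g * t)) = w j) :
    tr (⊤ : Subgroup G) (∑ j : Fin s, ∏ i : Fin m, ∏ g ∈ w j i, g • xP i) = 1 :=
  trace_one_formula_general m P hPrep xP hxP s w hw horb
end

section
/- Let G be a finite group, T a set of representatives of conjugacy classes of prime-order subgroups of G, and T = A ⊔ B a partition. Then there exists a commutative unital ring R with a G-action such that: for every P ∈ A there exists x_P ∈ R with tr_P(x_P) = 1, and for every P ∈ B no element x ∈ R satisfies tr_P(x) = 1. -/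
namespace TraceConstruction

open scoped Classical

set_option linter.unusedSectionVars false

variable {G : Type*} [Group G] [Fintype G]

abbrev Y (G : Type*) [Group G] (B : Set (Subgroup G)) : Type _ :=
  Σ Q : B, G ⧸ (Q : Subgroup G)

instance (B : Set (Subgroup G)) : SMul G (Y G B) :=
  ⟨fun g y => ⟨y.1, g • y.2⟩⟩

@[simp] lemma y_smul_def (B : Set (Subgroup G)) (g : G) (y : Y G B) :
    g • y = ⟨y.1, g • y.2⟩ := rfl

instance (B : Set (Subgroup G)) : MulAction G (Y G B) where
  one_smul y := by cases y with | mk Q c => simp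
  mul_smul g h y := by cases y with | mk Q c => simp [mul_smul]

noncomputable instance (B : Set (Subgroup G)) : SMul G (Shrink.{0} (Y G B)) :=
  ⟨fun g s => equivShrink.{0} (Y G B) (g • (equivShrink.{0} (Y G B)).symm s)⟩

lemma shrink_smul_def (B : Set (Subgroup G)) (g : G) (s : Shrink.{0} (Y G B)) :
    g • s = equivShrink.{0} (Y G B) (g • (equivShrink.{0} (Y G B)).symm s) := rfl

noncomputable instance (B : Set (Subgroup G)) : MulAction G (Shrink.{0} (Y G B)) where
  one_smul s := by rw [shrink_smul_def]; simp
  mul_smul g h s := by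
    rw [shrink_smul_def, shrink_smul_def, shrink_smul_def]; simp [mul_smul]

noncomputable instance instR (B : Set (Subgroup G)) :
    MulSemiringAction G (Shrink.{0} (Y G B) → ℤ) where
  smul g f := fun s => f (g⁻¹ • s)
  one_smul f := by funext s; show f ((1:G)⁻¹ • s) = f s; simp
  mul_smul g h f := by
    funext s; show f ((g*h)⁻¹ • s) = f (h⁻¹ • g⁻¹ • s); rw [mul_inv_rev, mul_smul]
  smul_zero g := rfl
  smul_add g f₁ f₂ := rfl
  smul_one g := rfl
  smul_mul g f₁ f₂ := rfl

lemma r_smul_apply (B : Set (Subgroup G)) (g : G) (f : Shrink.{0} (Y G B) → ℤ)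
    (s : Shrink.{0} (Y G B)) : (g • f) s = f (g⁻¹ • s) := rfl

lemma tr_apply (B : Set (Subgroup G)) (P : Subgroup G) (x : Shrink.{0} (Y G B) → ℤ)
    (s : Shrink.{0} (Y G B)) :
    tr P x s = ∑ σ : G, if σ ∈ P then x (σ⁻¹ • s) else 0 := by
  show (∑ σ : G, if σ ∈ P then σ • x else 0) s = _
  rw [Finset.sum_apply]
  exact Finset.sum_congr rfl fun σ _ => by split <;> rfl

/-- Freeness: if `P ∈ A`, then `P` acts freely on `Y G B`. -/
lemma sigma_free
    (T A B : Set (Subgroup G))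
    (hTprime : ∀ P ∈ T, (Nat.card P).Prime)
    (hTrep : ∀ Q : Subgroup G, (Nat.card Q).Prime →
      ∃! P, P ∈ T ∧ ∃ g : G, Q.map (MulAut.conj g).toMonoidHom = P)
    (hunion : A ∪ B = T) (hdisj : A ∩ B = ∅)
    {P : Subgroup G} (hPA : P ∈ A) :
    ∀ σ ∈ P, ∀ y : Y G B, σ • y = y → σ = 1 := by
  intro σ hσ y hfix
  by_contra hσ1
  obtain ⟨⟨Q, hQB⟩, c⟩ := y
  induction c using QuotientGroup.induction_on with
  | H g =>
    have hPT : P ∈ T := hunion ▸ Or.inl hPA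
    have hQT : Q ∈ T := hunion ▸ Or.inr hQB
    have hp : (Nat.card P).Prime := hTprime P hPT
    have hq : (Nat.card Q).Prime := hTprime Q hQT
    -- the fixed-point equation in the quotient
    have h2 : σ • ((g : G ⧸ Q)) = (g : G ⧸ Q) := by
      exact eq_of_heq (Sigma.ext_iff.mp hfix).2
    -- every element of P fixes the coset
    have hfixall : ∀ τ ∈ P, τ • ((g : G ⧸ Q)) = (g : G ⧸ Q) := by
      intro τ hτ
      have : Fact (Nat.card P).Prime := ⟨hp⟩
      have hσP : (⟨σ, hσ⟩ : P) ≠ 1 := by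
        simpa [Subtype.ext_iff] using hσ1
      have hmem : (⟨τ, hτ⟩ : P) ∈ Subgroup.zpowers (⟨σ, hσ⟩ : P) :=
        mem_zpowers_of_prime_card rfl hσP
      obtain ⟨k, hk⟩ := hmem
      have hτk : τ = σ ^ k := by
        have := congrArg (Subtype.val) hk
        simpa using this.symm
      subst hτk
      calc (σ ^ k) • ((g : G ⧸ Q)) = σ ^ k • (g : G ⧸ Q) := rfl
        _ = (g : G ⧸ Q) := by
          have hst : σ ∈ MulAction.stabilizer G ((g : G ⧸ Q)) := h2
          have := (MulAction.stabilizer G ((g : G ⧸ Q))).zpow_mem hst k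
          exact this
    -- so the conjugate of P lies in Q
    have hle : P.map (MulAut.conj g⁻¹).toMonoidHom ≤ Q := by
      rintro τ' ⟨τ, hτ, rfl⟩
      have := hfixall τ hτ
      rw [MulAction.Quotient.smul_coe] at this
      have hmem := Q.inv_mem (QuotientGroup.eq.mp this)
      simpa [MulAut.conj_apply, smul_eq_mul, mul_assoc] using hmem
    -- cardinalities force equality
    have hcardmap : Nat.card (P.map (MulAut.conj g⁻¹).toMonoidHom) = Nat.card P := by
      exact Nat.card_congr
        (P.equivMapOfInjective _ (MulAut.conj g⁻¹).injective).symm.toEquiv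
    have hdvd : Nat.card P ∣ Nat.card Q := hcardmap ▸ Subgroup.card_dvd_of_le hle
    have hpq : Nat.card P = Nat.card Q := (Nat.prime_dvd_prime_iff_eq hp hq).mp hdvd
    have heq : P.map (MulAut.conj g⁻¹).toMonoidHom = Q := by
      have : Finite Q := Subtype.finite
      exact Subgroup.eq_of_le_of_card_ge hle (by rw [hcardmap, hpq])
    -- uniqueness of representatives forces P = Q, contradicting A ∩ B = ∅
    obtain ⟨P', hP'⟩ := hTrep Q hq
    have hcomp : ((MulAut.conj g).toMonoidHom.comp (MulAut.conj g⁻¹).toMonoidHom)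
        = MonoidHom.id G := by
      ext x; simp [MulAut.conj_apply]; group
    have e1 : P = P' := hP'.2 P ⟨hPT, g, by
      rw [← heq, Subgroup.map_map, hcomp, Subgroup.map_id]⟩
    have e2 : Q = P' := hP'.2 Q ⟨hQT, 1, by
      have : (MulAut.conj (1 : G)).toMonoidHom = MonoidHom.id G := by
        ext x; simp
      rw [this, Subgroup.map_id]⟩
    have hPQ : P = Q := e1.trans e2.symm
    exact Set.eq_empty_iff_forall_notMem.mp hdisj P ⟨hPA, hPQ ▸ hQB⟩

end TraceConstruction

open TraceConstruction in
/-- Independence of the factors: for every partition `T = A ⊔ B` of a set of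
representatives of the conjugacy classes of prime-order subgroups of `G`, there is a
commutative `G`-ring `R` in which every `P ∈ A` has an element of trace `1` and no
`P ∈ B` does. -/
theorem exists_ring_realizing_partition {G : Type*} [Group G] [Fintype G]
    (T A B : Set (Subgroup G))
    (hTprime : ∀ P ∈ T, (Nat.card P).Prime)
    (hTrep : ∀ Q : Subgroup G, (Nat.card Q).Prime →
      ∃! P, P ∈ T ∧ ∃ g : G, Q.map (MulAut.conj g).toMonoidHom = P)
    (hunion : A ∪ B = T) (hdisj : A ∩ B = ∅) :
    ∃ (R : Type) (_ : CommRing R) (_ : MulSemiringAction G R),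
      (∀ P ∈ A, ∃ x : R, tr P x = 1) ∧ (∀ P ∈ B, ¬ ∃ x : R, tr P x = 1) := by
  classical
  refine ⟨Shrink.{0} (Y G B) → ℤ, inferInstance, instR B, ?_, ?_⟩
  · -- every `P ∈ A` has an element of trace 1
    intro P hPA
    have hfree : ∀ σ ∈ P, ∀ s : Shrink.{0} (Y G B), σ • s = s → σ = 1 := by
      intro σ hσ s hfix
      refine sigma_free T A B hTprime hTrep hunion hdisj hPA σ hσ
        ((equivShrink.{0} (Y G B)).symm s) ?_
      have := congrArg (equivShrink.{0} (Y G B)).symm hfix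
      rwa [shrink_smul_def, Equiv.symm_apply_apply] at this
    set e : Setoid (Shrink.{0} (Y G B)) := MulAction.orbitRel P (Shrink.{0} (Y G B)) with he
    refine ⟨fun s => if (Quotient.mk e s).out = s then 1 else 0, ?_⟩
    funext s
    rw [tr_apply, Pi.one_apply]
    obtain ⟨τ, hτ⟩ : (Quotient.mk e s).out ∈ MulAction.orbit P s := by
      have h : e ((Quotient.mk e s).out) s := Quotient.exact (Quotient.out_eq _)
      exact h
    set σ₀ : G := (↑τ)⁻¹ with hσ₀def
    have hσ₀P : σ₀ ∈ P := P.inv_mem τ.2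
    have hσ₀ : σ₀⁻¹ • s = (Quotient.mk e s).out := by
      rw [hσ₀def, inv_inv]
      exact hτ
    have hsum : ∀ σ : G,
        (if σ ∈ P then (if (Quotient.mk e (σ⁻¹ • s)).out = σ⁻¹ • s then (1:ℤ) else 0) else 0)
        = if σ = σ₀ then 1 else 0 := by
      intro σ
      by_cases hσ : σ ∈ P
      · have horb : Quotient.mk e (σ⁻¹ • s) = Quotient.mk e s := by
          refine Quotient.sound ?_
          exact ⟨⟨σ⁻¹, P.inv_mem hσ⟩, rfl⟩
        rw [if_pos hσ, horb]
        by_cases hs : σ = σ₀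
        · subst hs
          rw [if_pos hσ₀.symm, if_pos rfl]
        · rw [if_neg, if_neg hs]
          intro hcon
          apply hs
          have h1 : σ₀⁻¹ • s = σ⁻¹ • s := hσ₀.trans hcon
          have h2 : (σ * σ₀⁻¹) • s = s := by
            rw [mul_smul, h1, ← mul_smul, mul_inv_cancel, one_smul]
          have h3 := hfree (σ * σ₀⁻¹) (P.mul_mem hσ (P.inv_mem hσ₀P)) s h2
          exact mul_inv_eq_one.mp h3
      · rw [if_neg hσ, if_neg]
        intro hcon
        exact hσ (hcon ▸ hσ₀P)
    calc (∑ σ : G, if σ ∈ P then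
            (fun t => if (Quotient.mk e t).out = t then (1:ℤ) else 0) (σ⁻¹ • s) else 0)
        = ∑ σ : G, if σ = σ₀ then (1:ℤ) else 0 :=
          Finset.sum_congr rfl fun σ _ => hsum σ
      _ = 1 := by rw [Finset.sum_ite_eq' Finset.univ σ₀ (fun _ => (1:ℤ))]; simp
  · -- no `P ∈ B` has an element of trace 1
    rintro P hPB ⟨x, hx⟩
    have hp : (Nat.card P).Prime := hTprime P (hunion ▸ Or.inr hPB)
    set y₀ : Shrink.{0} (Y G B) := equivShrink.{0} (Y G B) ⟨⟨P, hPB⟩, ((1:G) : G ⧸ P)⟩ with hy₀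
    have hfix : ∀ σ ∈ P, σ⁻¹ • y₀ = y₀ := by
      intro σ hσ
      rw [hy₀, shrink_smul_def, Equiv.symm_apply_apply]
      congr 1
      rw [y_smul_def]
      have h2 : σ⁻¹ • ((1:G) : G ⧸ (P : Subgroup G)) = ((1:G) : G ⧸ P) := by
        rw [MulAction.Quotient.smul_coe]
        exact QuotientGroup.eq.mpr (by simpa [smul_eq_mul] using hσ)
      exact congrArg (fun c => (⟨⟨P, hPB⟩, c⟩ : Y G B)) h2
    have h1 : ∑ σ : G, (if σ ∈ P then x (σ⁻¹ • y₀) else 0) = 1 := by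
      have := congrFun hx y₀
      rwa [tr_apply, Pi.one_apply] at this
    have h2 : ∑ σ : G, (if σ ∈ P then x y₀ else 0) = 1 := by
      rw [← h1]
      refine Finset.sum_congr rfl fun σ _ => ?_
      by_cases hσ : σ ∈ P
      · rw [if_pos hσ, if_pos hσ, hfix σ hσ]
      · rw [if_neg hσ, if_neg hσ]
    rw [Finset.sum_ite, Finset.sum_const, Finset.sum_const_zero, add_zero] at h2
    have hcard : (Finset.univ.filter fun σ : G => σ ∈ P).card = Nat.card P := by
      rw [Nat.card_eq_fintype_card]
      exact (Fintype.card_subtype _).symm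
    rw [hcard] at h2
    rw [nsmul_eq_mul] at h2
    have hdvd : (Nat.card P : ℤ) ∣ 1 := ⟨x y₀, h2.symm⟩
    have h3 : (Nat.card P) ∣ 1 := by exact_mod_cast hdvd
    exact hp.ne_one (Nat.dvd_one.mp h3)
end
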